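/- The set of functions of the form x ↦ Σ_{j=1}^{m} a_j · σ(w_j · x + b_j), with σ(t) = max(0, t) (ReLU), m ∈ ℕ, a_j, w_j, b_j ∈ ℝ, is dense in C([0,1], ℝ) with the uniform norm. -/

import Mathlib

open Finset

lemma relu_tele (N : ℕ) (hN : (N:ℝ) ≠ 0) (F : ℕ → ℝ) (x : ℝ) (j : ℕ) :
    ∑ k ∈ Finset.range (j+1),
      (((N:ℝ)*(F (k+1) - F k) - (if k = 0 then 0 else (N:ℝ)*(F k - F (k-1)))) * (x - (k:ℝ)/N))
      = (N:ℝ)*(F (j+1) - F j) * (x - (j:ℝ)/N) + (F j - F 0) := by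
  induction j with
  | zero => simp
  | succ j ih =>
      rw [Finset.sum_range_succ, ih]
      simp only [Nat.succ_ne_zero, if_false, Nat.add_sub_cancel]
      push_cast
      field_simp
      ring

lemma relu_trunc (N : ℕ) (c : ℕ → ℝ) (x : ℝ) (j : ℕ) (hj : j < N)
    (h1 : (j:ℝ)/N ≤ x) (h2 : x ≤ ((j:ℝ)+1)/N) :
    ∑ k ∈ Finset.range N, c k * max 0 (x - (k:ℝ)/N)
      = ∑ k ∈ Finset.range (j+1), c k * (x - (k:ℝ)/N) := by
  have hN : (0:ℝ) < N := by
    have : 0 < N := Nat.lt_of_le_of_lt (Nat.zero_le j) hj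
    exact_mod_cast this
  rw [← Finset.sum_range_add_sum_Ico _ (show j+1 ≤ N from hj)]
  have h0 : ∑ k ∈ Finset.Ico (j+1) N, c k * max 0 (x - (k:ℝ)/N) = 0 := by
    apply Finset.sum_eq_zero
    intro k hk
    have hk1 : j+1 ≤ k := (Finset.mem_Ico.mp hk).1
    have hle : x - (k:ℝ)/N ≤ 0 := by
      have h2' : ((j:ℝ)+1)/N ≤ (k:ℝ)/N := by
        gcongr
        exact_mod_cast hk1
      linarith
    rw [max_eq_left hle, mul_zero]
  rw [h0, add_zero]
  apply Finset.sum_congr rfl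
  intro k hk
  have hk1 : k ≤ j := Nat.lt_succ_iff.mp (Finset.mem_range.mp hk)
  have hge : (0:ℝ) ≤ x - (k:ℝ)/N := by
    have : (k:ℝ)/N ≤ (j:ℝ)/N := by
      gcongr
    linarith
  rw [max_eq_right hge]

theorem relu_networks_dense :
    Dense {g : C(Set.Icc (0:ℝ) 1, ℝ) |
      ∃ (m : ℕ) (a w b : Fin m → ℝ), ∀ x : Set.Icc (0:ℝ) 1,
        g x = ∑ j, a j * max 0 (w j * (x : ℝ) + b j)} := by
  intro f
  rw [Metric.mem_closure_iff]
  intro ε hε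
  have hf : UniformContinuous f := CompactSpace.uniformContinuous_of_continuous f.continuous
  rw [Metric.uniformContinuous_iff] at hf
  obtain ⟨δ, hδ, hδf⟩ := hf (ε/3) (by positivity)
  obtain ⟨n, hn⟩ := exists_nat_one_div_lt hδ
  set N := n + 1 with hNdef
  have hN0 : 0 < N := Nat.succ_pos n
  have hNR : (0:ℝ) < N := by exact_mod_cast hN0
  have hNne : (N:ℝ) ≠ 0 := ne_of_gt hNR
  have hstep : (1:ℝ)/N < δ := by
    have : ((N:ℕ):ℝ) = (n:ℝ) + 1 := by push_cast [hNdef]; ring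
    rw [this]; exact hn
  have hmem : ∀ k : ℕ, min ((k:ℝ)/N) 1 ∈ Set.Icc (0:ℝ) 1 :=
    fun k => ⟨le_min (by positivity) zero_le_one, min_le_right _ _⟩
  set F : ℕ → ℝ := fun k => f ⟨min ((k:ℝ)/N) 1, hmem k⟩ with hF
  set c : ℕ → ℝ := fun k =>
    (N:ℝ)*(F (k+1) - F k) - (if k = 0 then 0 else (N:ℝ)*(F k - F (k-1))) with hc
  have gcont : Continuous fun x : Set.Icc (0:ℝ) 1 =>
      F 0 + ∑ k ∈ Finset.range N, c k * max 0 ((x:ℝ) - (k:ℝ)/N) := by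
    apply continuous_const.add
    apply continuous_finset_sum
    intro k _
    exact continuous_const.mul (continuous_const.max (continuous_subtype_val.sub continuous_const))
  set g : C(Set.Icc (0:ℝ) 1, ℝ) := ⟨_, gcont⟩ with hg
  have hFk : ∀ k : ℕ, ∀ hk : k ≤ N, F k = f ⟨(k:ℝ)/N,
      ⟨by positivity, by rw [div_le_one hNR]; exact_mod_cast hk⟩⟩ := by
    intro k hk
    have : min ((k:ℝ)/N) 1 = (k:ℝ)/N := min_eq_left (by
      rw [div_le_one hNR]; exact_mod_cast hk)
    simp only [hF]
    congr 1
    exact Subtype.ext this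
  refine ⟨g, ⟨N+1, Fin.cases (F 0) (fun j => c j), Fin.cases 0 (fun _ => 1),
      Fin.cases 1 (fun j => -((j:ℝ)/N)), fun x => ?_⟩, ?_⟩
  · show F 0 + ∑ k ∈ Finset.range N, c k * max 0 ((x:ℝ) - (k:ℝ)/N) = _
    rw [Fin.sum_univ_succ]
    simp only [Fin.cases_zero, Fin.cases_succ]
    norm_num
    rw [Fin.sum_univ_eq_sum_range (fun k => c k * max 0 ((x:ℝ) + -((k:ℝ)/N))) N]
    simp only [← sub_eq_add_neg]
  · rw [ContinuousMap.dist_lt_iff hε]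
    intro x
    obtain ⟨hx0, hx1⟩ := x.2
    set xr := (x:ℝ) with hxr
    set j : ℕ := min (Nat.floor ((N:ℝ) * xr)) (N-1) with hj
    have hjN : j < N := lt_of_le_of_lt (min_le_right _ _) (Nat.sub_lt hN0 one_pos)
    have hj1 : j + 1 ≤ N := hjN
    have hxl : (j:ℝ)/N ≤ xr := by
      rw [div_le_iff₀ hNR]
      have h1 : (j:ℝ) ≤ (Nat.floor ((N:ℝ)*xr) : ℝ) := by exact_mod_cast min_le_left _ _
      have h2 : (Nat.floor ((N:ℝ)*xr) : ℝ) ≤ (N:ℝ)*xr := Nat.floor_le (by positivity)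
      nlinarith
    have hxu : xr ≤ ((j:ℝ)+1)/N := by
      rcases le_or_gt (Nat.floor ((N:ℝ)*xr)) (N-1) with h | h
      · have hjeq : j = Nat.floor ((N:ℝ)*xr) := min_eq_left h
        rw [le_div_iff₀ hNR, hjeq, mul_comm xr ((N:ℕ):ℝ)]
        exact (Nat.lt_floor_add_one _).le
      · have hjeq : j = N-1 := min_eq_right (le_of_lt h)
        have hjn : (j:ℝ) + 1 = N := by
          have : j + 1 = N := by omega
          exact_mod_cast this
        rw [hjn, div_self hNne]
        exact hx1
    have hgap : xr - (j:ℝ)/N ≤ 1/N := by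
      rw [show ((j:ℝ)+1)/N = (j:ℝ)/N + 1/N from by ring] at hxu
      linarith
    have hgx : g x = F j + (N:ℝ)*(F (j+1) - F j) * (xr - (j:ℝ)/N) := by
      show F 0 + ∑ k ∈ Finset.range N, c k * max 0 (xr - (k:ℝ)/N) = _
      rw [relu_trunc N c xr j hjN hxl hxu]
      simp only [hc]
      rw [relu_tele N hNne F xr j]
      ring
    have hd1 : |f x - F j| < ε/3 := by
      rw [hFk j (le_of_lt hjN)]
      rw [← Real.dist_eq]
      apply hδf
      rw [Subtype.dist_eq, Real.dist_eq]
      rw [abs_of_nonneg (by simpa using sub_nonneg.mpr hxl)]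
      calc xr - (j:ℝ)/N ≤ 1/N := hgap
        _ < δ := hstep
    have hd2 : |F (j+1) - F j| < ε/3 := by
      rw [hFk (j+1) hj1, hFk j (le_of_lt hjN), ← Real.dist_eq]
      apply hδf
      rw [Subtype.dist_eq, Real.dist_eq]
      rw [show (((j+1:ℕ):ℝ))/N - (j:ℝ)/N = 1/N from by push_cast; ring]
      rw [abs_of_nonneg (by positivity)]
      exact hstep
    have hdgap : (0:ℝ) ≤ xr - (j:ℝ)/N := sub_nonneg.mpr hxl
    rw [Real.dist_eq, hgx]
    have habs : |f x - (F j + (N:ℝ)*(F (j+1) - F j) * (xr - (j:ℝ)/N))|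
        ≤ |f x - F j| + (N:ℝ) * |F (j+1) - F j| * (xr - (j:ℝ)/N) := by
      have h1 : f x - (F j + (N:ℝ)*(F (j+1) - F j) * (xr - (j:ℝ)/N))
          = (f x - F j) - (N:ℝ)*(F (j+1) - F j) * (xr - (j:ℝ)/N) := by ring
      rw [h1]
      refine le_trans (abs_sub _ _) ?_
      gcongr
      rw [abs_mul, abs_mul, abs_of_nonneg (le_of_lt hNR), abs_of_nonneg hdgap]
    have hb2 : (N:ℝ) * |F (j+1) - F j| * (xr - (j:ℝ)/N) ≤ ε/3 := by
      calc (N:ℝ) * |F (j+1) - F j| * (xr - (j:ℝ)/N)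
          ≤ (N:ℝ) * (ε/3) * (1/N) := by
            gcongr
        _ = ε/3 := by field_simp
    linarith
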